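/- arXiv:2401.08928 — 2 statements merged into one kernel-verified Lean document; each statement's English description precedes it below -/
import Mathlib

section
/- Let d ≥ 2 be an integer, let f and g be strictly monotone increasing real functions on [0, ∞), and let φ, ψ ∈ [0, π/2]. Suppose the unit vectors v₁, n₁, v₂, n₂ ∈ ℝ^d satisfy ⟨v₁, n₁⟩ = cos φ and ⟨v₂, n₂⟩ = cos ψ and minimize P(v₁, n₁, v₂, n₂) = −f(|v₁ − v₂|) + g(|n₁ − n₂|) over all quadruples of unit vectors satisfying these two inner-product constraints. Writing 2η = arccos⟨n₁, n₂⟩, one has φ + 2η + ψ ≤ π and arccos⟨v₁, v₂⟩ = φ + 2η + ψ; that is, the four vectors lie in a closed half-plane and occur in the angular order v₁, n₁, n₂, v₂. -/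
/-!
Put the competitors on a great circle `u` through an orthonormal pair:
`w₁ = u 0`, `m₁ = u φ`, `m₂ = u (φ + β)`, `w₂ = u (φ + β + ψ)` satisfy both constraints for
every `β`. For `β = π - φ - ψ` the `w`'s are antipodal, so the `f`-term cannot be beaten and
minimality forces `|n₁ - n₂| ≤ |m₁ - m₂|`, i.e. `2η ≤ π - φ - ψ`. For `β = 2η` the `g`-term is
unchanged, so minimality forces `|v₁ - v₂| ≥ |w₁ - w₂|`, i.e. `∠(v₁, v₂) ≥ φ + 2η + ψ`. The
reverse inequality is the triangle inequality for angles along `v₁, n₁, n₂, v₂`.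
-/

open Real Set InnerProductGeometry
open scoped RealInnerProductSpace

theorem le_of_neg_add_le_neg_add {f g : ℝ → ℝ} {a a' b b' : ℝ} (hf : MonotoneOn f (Ici 0))
    (hg : StrictMonoOn g (Ici 0)) (ha : 0 ≤ a) (haa' : a ≤ a') (hb : 0 ≤ b) (hb' : 0 ≤ b')
    (h : -f a + g b ≤ -f a' + g b') : b ≤ b' := by
  have hfa := hf ha (ha.trans haa') haa'
  exact (hg.le_iff_le hb hb').mp (by linarith)

section UnitVectors

variable {V : Type*} [NormedAddCommGroup V] [InnerProductSpace ℝ V] {x y z w : V}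

theorem angle_eq_arccos_inner_of_norm_eq_one (hx : ‖x‖ = 1) (hy : ‖y‖ = 1) :
    angle x y = arccos ⟪x, y⟫ := by
  simp [angle, hx, hy]

theorem norm_sub_mul_self_of_norm_eq_one (hx : ‖x‖ = 1) (hy : ‖y‖ = 1) :
    ‖x - y‖ * ‖x - y‖ = 2 - 2 * cos (angle x y) := by
  rw [norm_sub_sq_eq_norm_sq_add_norm_sq_sub_two_mul_norm_mul_norm_mul_cos_angle,
    hx, hy]
  ring

theorem norm_sub_le_norm_sub_iff_angle_le (hx : ‖x‖ = 1) (hy : ‖y‖ = 1) (hz : ‖z‖ = 1)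
    (hw : ‖w‖ = 1) : ‖x - y‖ ≤ ‖z - w‖ ↔ angle x y ≤ angle z w := by
  rw [mul_self_le_mul_self_iff (norm_nonneg _) (norm_nonneg _),
    norm_sub_mul_self_of_norm_eq_one hx hy, norm_sub_mul_self_of_norm_eq_one hz hw,
    ← strictAntiOn_cos.le_iff_ge ⟨angle_nonneg z w, angle_le_pi z w⟩
      ⟨angle_nonneg x y, angle_le_pi x y⟩]
  constructor <;> intro h <;> linarith

theorem norm_sub_eq_norm_sub_of_angle_eq (hx : ‖x‖ = 1) (hy : ‖y‖ = 1) (hz : ‖z‖ = 1)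
    (hw : ‖w‖ = 1) (h : angle x y = angle z w) : ‖x - y‖ = ‖z - w‖ :=
  le_antisymm ((norm_sub_le_norm_sub_iff_angle_le hx hy hz hw).2 h.le)
    ((norm_sub_le_norm_sub_iff_angle_le hz hw hx hy).2 h.ge)

theorem exists_orthonormal_pair (hV : 2 ≤ Module.finrank ℝ V) :
    ∃ e₀ e₁ : V, ‖e₀‖ = 1 ∧ ‖e₁‖ = 1 ∧ ⟪e₀, e₁⟫ = 0 := by
  have : FiniteDimensional ℝ V := Module.finite_of_finrank_pos (by omega)
  have hb := (stdOrthonormalBasis ℝ V).orthonormal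
  exact ⟨_, _, hb.1 ⟨0, by omega⟩, hb.1 ⟨1, by omega⟩, hb.2 (by simp [Fin.ext_iff])⟩

end UnitVectors

section Circle

variable {V : Type*} [NormedAddCommGroup V] [InnerProductSpace ℝ V]

noncomputable def circlePoint (e₀ e₁ : V) (θ : ℝ) : V := cos θ • e₀ + sin θ • e₁

variable {e₀ e₁ : V}

theorem inner_circlePoint (h₀ : ‖e₀‖ = 1) (h₁ : ‖e₁‖ = 1) (h₀₁ : ⟪e₀, e₁⟫ = 0) (a b : ℝ) :
    ⟪circlePoint e₀ e₁ a, circlePoint e₀ e₁ b⟫ = cos (b - a) := by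
  simp only [circlePoint, inner_add_left, inner_add_right, real_inner_smul_left,
    real_inner_smul_right, real_inner_self_eq_norm_sq, h₀, h₁, h₀₁, real_inner_comm e₀ e₁, cos_sub]
  ring

theorem norm_circlePoint (h₀ : ‖e₀‖ = 1) (h₁ : ‖e₁‖ = 1) (h₀₁ : ⟪e₀, e₁⟫ = 0) (θ : ℝ) :
    ‖circlePoint e₀ e₁ θ‖ = 1 := by
  have h := inner_circlePoint h₀ h₁ h₀₁ θ θ
  rwa [sub_self, cos_zero, real_inner_self_eq_norm_sq,
    pow_eq_one_iff_of_nonneg (norm_nonneg _) two_ne_zero] at h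

theorem angle_circlePoint (h₀ : ‖e₀‖ = 1) (h₁ : ‖e₁‖ = 1) (h₀₁ : ⟪e₀, e₁⟫ = 0) {a b : ℝ}
    (hab : a ≤ b) (hba : b ≤ a + π) :
    angle (circlePoint e₀ e₁ a) (circlePoint e₀ e₁ b) = b - a := by
  rw [angle_eq_arccos_inner_of_norm_eq_one (norm_circlePoint h₀ h₁ h₀₁ a)
    (norm_circlePoint h₀ h₁ h₀₁ b), inner_circlePoint h₀ h₁ h₀₁,
    arccos_cos (by linarith) (by linarith)]

end Circle

section ConstrainedMin

variable {V : Type*} [NormedAddCommGroup V] [InnerProductSpace ℝ V] {f g : ℝ → ℝ} {φ ψ : ℝ}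
  {v₁ n₁ v₂ n₂ : V}

def IsConstrainedMin (f g : ℝ → ℝ) (φ ψ : ℝ) (v₁ n₁ v₂ n₂ : V) : Prop :=
  ∀ w₁ m₁ w₂ m₂ : V, ‖w₁‖ = 1 → ‖m₁‖ = 1 → ‖w₂‖ = 1 → ‖m₂‖ = 1 →
    ⟪w₁, m₁⟫ = cos φ → ⟪w₂, m₂⟫ = cos ψ →
    -f ‖v₁ - v₂‖ + g ‖n₁ - n₂‖ ≤ -f ‖w₁ - w₂‖ + g ‖m₁ - m₂‖

theorem IsConstrainedMin.le_circlePoint (h : IsConstrainedMin f g φ ψ v₁ n₁ v₂ n₂) {e₀ e₁ : V}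
    (he₀ : ‖e₀‖ = 1) (he₁ : ‖e₁‖ = 1) (he₀₁ : ⟪e₀, e₁⟫ = 0) (β : ℝ) :
    -f ‖v₁ - v₂‖ + g ‖n₁ - n₂‖ ≤
      -f ‖circlePoint e₀ e₁ 0 - circlePoint e₀ e₁ (φ + β + ψ)‖ +
        g ‖circlePoint e₀ e₁ φ - circlePoint e₀ e₁ (φ + β)‖ := by
  have hu := norm_circlePoint he₀ he₁ he₀₁
  refine h _ _ _ _ (hu _) (hu _) (hu _) (hu _) ?_ ?_
  · rw [inner_circlePoint he₀ he₁ he₀₁, sub_zero]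
  · rw [inner_circlePoint he₀ he₁ he₀₁, ← cos_neg]
    ring_nf

theorem IsConstrainedMin.angle_le (h : IsConstrainedMin f g φ ψ v₁ n₁ v₂ n₂)
    (hf : MonotoneOn f (Ici 0)) (hg : StrictMonoOn g (Ici 0)) (hV : 2 ≤ Module.finrank ℝ V)
    (hφ : 0 ≤ φ) (hψ : 0 ≤ ψ) (hφψ : φ + ψ ≤ π)
    (hv₁ : ‖v₁‖ = 1) (hn₁ : ‖n₁‖ = 1) (hv₂ : ‖v₂‖ = 1) (hn₂ : ‖n₂‖ = 1) :
    angle n₁ n₂ ≤ π - φ - ψ := by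
  obtain ⟨e₀, e₁, he₀, he₁, he₀₁⟩ := exists_orthonormal_pair hV
  have hu := norm_circlePoint he₀ he₁ he₀₁
  have key := h.le_circlePoint he₀ he₁ he₀₁ (π - φ - ψ)
  rw [show φ + (π - φ - ψ) + ψ = π by ring] at key
  have hv : ‖v₁ - v₂‖ ≤ ‖circlePoint e₀ e₁ 0 - circlePoint e₀ e₁ π‖ := by
    rw [norm_sub_le_norm_sub_iff_angle_le hv₁ hv₂ (hu 0) (hu π),
      angle_circlePoint he₀ he₁ he₀₁ pi_pos.le (by simp), sub_zero]
    exact angle_le_pi v₁ v₂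
  have hn := le_of_neg_add_le_neg_add hf hg (norm_nonneg _) hv (norm_nonneg _) (norm_nonneg _) key
  rwa [norm_sub_le_norm_sub_iff_angle_le hn₁ hn₂ (hu _) (hu _),
    angle_circlePoint he₀ he₁ he₀₁ (by linarith) (by linarith), add_sub_cancel_left] at hn

theorem IsConstrainedMin.le_angle (h : IsConstrainedMin f g φ ψ v₁ n₁ v₂ n₂)
    (hf : StrictMonoOn f (Ici 0)) (hV : 2 ≤ Module.finrank ℝ V) (hφ : 0 ≤ φ) (hψ : 0 ≤ ψ)
    (hπ : φ + angle n₁ n₂ + ψ ≤ π)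
    (hv₁ : ‖v₁‖ = 1) (hn₁ : ‖n₁‖ = 1) (hv₂ : ‖v₂‖ = 1) (hn₂ : ‖n₂‖ = 1) :
    φ + angle n₁ n₂ + ψ ≤ angle v₁ v₂ := by
  obtain ⟨e₀, e₁, he₀, he₁, he₀₁⟩ := exists_orthonormal_pair hV
  have hu := norm_circlePoint he₀ he₁ he₀₁
  have hτ := angle_nonneg n₁ n₂
  have key := h.le_circlePoint he₀ he₁ he₀₁ (angle n₁ n₂)
  rw [norm_sub_eq_norm_sub_of_angle_eq (hu φ) (hu (φ + angle n₁ n₂)) hn₁ hn₂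
      (by rw [angle_circlePoint he₀ he₁ he₀₁ (by linarith) (by linarith),
        add_sub_cancel_left])] at key
  have hw : ‖circlePoint e₀ e₁ 0 - circlePoint e₀ e₁ (φ + angle n₁ n₂ + ψ)‖ ≤ ‖v₁ - v₂‖ :=
    (hf.le_iff_le (norm_nonneg _) (norm_nonneg _)).mp (by linarith)
  rwa [norm_sub_le_norm_sub_iff_angle_le (hu _) (hu _) hv₁ hv₂,
    angle_circlePoint he₀ he₁ he₀₁ (by linarith) (by linarith), sub_zero] at hw

end ConstrainedMin

theorem angle_le_add_angle_add_of_inner_eq_cos {V : Type*} [NormedAddCommGroup V]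
    [InnerProductSpace ℝ V] {v₁ n₁ v₂ n₂ : V} {φ ψ : ℝ} (hφ : φ ∈ Icc 0 π) (hψ : ψ ∈ Icc 0 π)
    (hv₁ : ‖v₁‖ = 1) (hn₁ : ‖n₁‖ = 1) (hv₂ : ‖v₂‖ = 1) (hn₂ : ‖n₂‖ = 1)
    (h₁ : ⟪v₁, n₁⟫ = cos φ) (h₂ : ⟪v₂, n₂⟫ = cos ψ) :
    angle v₁ v₂ ≤ φ + angle n₁ n₂ + ψ := by
  have hφ' : angle v₁ n₁ = φ := by
    rw [angle_eq_arccos_inner_of_norm_eq_one hv₁ hn₁, h₁, arccos_cos hφ.1 hφ.2]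
  have hψ' : angle n₂ v₂ = ψ := by
    rw [angle_comm, angle_eq_arccos_inner_of_norm_eq_one hv₂ hn₂, h₂, arccos_cos hψ.1 hψ.2]
  linarith [angle_le_angle_add_angle v₁ n₁ v₂, angle_le_angle_add_angle n₁ n₂ v₂]

theorem stmt4 (d : ℕ) (hd : 2 ≤ d) (f g : ℝ → ℝ)
    (hf : StrictMonoOn f (Set.Ici 0)) (hg : StrictMonoOn g (Set.Ici 0))
    (φ ψ : ℝ) (hφ : φ ∈ Set.Icc 0 (Real.pi / 2)) (hψ : ψ ∈ Set.Icc 0 (Real.pi / 2))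
    (v₁ n₁ v₂ n₂ : EuclideanSpace ℝ (Fin d))
    (hv₁ : ‖v₁‖ = 1) (hn₁ : ‖n₁‖ = 1) (hv₂ : ‖v₂‖ = 1) (hn₂ : ‖n₂‖ = 1)
    (h₁ : (inner ℝ v₁ n₁ : ℝ) = Real.cos φ) (h₂ : (inner ℝ v₂ n₂ : ℝ) = Real.cos ψ)
    (hmin : ∀ w₁ m₁ w₂ m₂ : EuclideanSpace ℝ (Fin d),
      ‖w₁‖ = 1 → ‖m₁‖ = 1 → ‖w₂‖ = 1 → ‖m₂‖ = 1 →
      (inner ℝ w₁ m₁ : ℝ) = Real.cos φ → (inner ℝ w₂ m₂ : ℝ) = Real.cos ψ →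
      -f ‖v₁ - v₂‖ + g ‖n₁ - n₂‖ ≤ -f ‖w₁ - w₂‖ + g ‖m₁ - m₂‖) :
    φ + Real.arccos (inner ℝ n₁ n₂ : ℝ) + ψ ≤ Real.pi ∧
    Real.arccos (inner ℝ v₁ v₂ : ℝ) = φ + Real.arccos (inner ℝ n₁ n₂ : ℝ) + ψ := by
  obtain ⟨hφ₀, hφπ⟩ := hφ
  obtain ⟨hψ₀, hψπ⟩ := hψ
  have hV : 2 ≤ Module.finrank ℝ (EuclideanSpace ℝ (Fin d)) := by simpa using hd
  have hmin' : IsConstrainedMin f g φ ψ v₁ n₁ v₂ n₂ := hmin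
  rw [← angle_eq_arccos_inner_of_norm_eq_one hn₁ hn₂,
    ← angle_eq_arccos_inner_of_norm_eq_one hv₁ hv₂]
  have hπ : φ + angle n₁ n₂ + ψ ≤ π := by
    linarith [hmin'.angle_le hf.monotoneOn hg hV hφ₀ hψ₀ (by linarith) hv₁ hn₁ hv₂ hn₂]
  refine ⟨hπ, le_antisymm ?_ (hmin'.le_angle hf hV hφ₀ hψ₀ hπ hv₁ hn₁ hv₂ hn₂)⟩
  exact angle_le_add_angle_add_of_inner_eq_cos ⟨hφ₀, by linarith⟩ ⟨hψ₀, by linarith⟩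
    hv₁ hn₁ hv₂ hn₂ h₁ h₂
end

section
/- Let d ≥ 2 be an integer and λ ≥ λ̂ := (d+1)b_d/(4 b_{d−1}). Then inf_{χ ∈ Γ_{ς,ς}} ∫_{[0,π/2]²} K_λ^d(φ, ψ) dχ(φ, ψ) = m_d − λ. -/
/-!
For unit vectors, the triangle inequality for angles gives `∠(v₁, v₂) ≤ φ + θ + ψ` with
`θ = ∠(n₁, n₂)`, while `‖n₁ - n₂‖ = 2 sin (θ / 2)`. A trigonometric estimate then yields
`cos (φ + ψ) ≤ ⟨v₁, v₂⟩ + ‖n₁ - n₂‖`, with equality for `n₁ = n₂` and `v₁`, `v₂` on opposite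
sides of it in a plane. Since `λ b_{d-1} / b_d ≥ (d + 1) / 4`, this gives
`K_λ^d(φ, ψ) = (d + 1)/4 · (1 + cos (φ + ψ)) - λ` on `[0, π/2]²`, where every coupling of `ς_d`
with itself is concentrated. The functional to minimise is therefore an increasing affine image
of the one defining `m_d`, and such a map commutes with infima.
-/

open MeasureTheory Real Set

noncomputable section

/-- `b d` is the volume of the unit ball in `ℝ^d`. -/
def ballVol (d : ℕ) : ℝ := Real.pi ^ ((d : ℝ) / 2) / Real.Gamma ((d : ℝ) / 2 + 1)

/-- `K_λ^d(φ,ψ)`: the infimum of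
`(d+1)/4 · |v₁+v₂|²/2 + λ((b_{d−1}/b_d)|n₁−n₂| − 1)` over unit vectors with
`⟨v₁,n₁⟩ = cos φ` and `⟨v₂,n₂⟩ = cos ψ`. -/
def Kfun (d : ℕ) (lam φ ψ : ℝ) : ℝ :=
  sInf {r : ℝ | ∃ v₁ n₁ v₂ n₂ : EuclideanSpace ℝ (Fin d),
    ‖v₁‖ = 1 ∧ ‖n₁‖ = 1 ∧ ‖v₂‖ = 1 ∧ ‖n₂‖ = 1 ∧
    (inner ℝ v₁ n₁ : ℝ) = Real.cos φ ∧ (inner ℝ v₂ n₂ : ℝ) = Real.cos ψ ∧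
    r = ((d : ℝ) + 1) / 4 * (‖v₁ + v₂‖ ^ 2 / 2) +
        lam * (ballVol (d - 1) / ballVol d * ‖n₁ - n₂‖ - 1)}

/-- The measure `ς_d` on `[0, π/2]` with density `(d−1) sin^{d−2}φ cos φ`. -/
def sigmaMeasure (d : ℕ) : Measure ℝ :=
  (volume.restrict (Set.Icc 0 (Real.pi / 2))).withDensity fun φ =>
    ENNReal.ofReal (((d : ℝ) - 1) * Real.sin φ ^ (d - 2) * Real.cos φ)

/-- `Γ_{ς,ς}`: measures on the square whose marginals equal `ς_d`. -/
def GammaSigmaSigma (d : ℕ) : Set (Measure (ℝ × ℝ)) :=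
  {χ | χ.map Prod.fst = sigmaMeasure d ∧ χ.map Prod.snd = sigmaMeasure d}

/-- `m_d = (d+1)/4 · inf_{χ ∈ Γ_{ς,ς}} ∫ (1 + cos(φ+ψ)) dχ`. -/
def mConst (d : ℕ) : ℝ :=
  ((d : ℝ) + 1) / 4 *
    sInf {r : ℝ | ∃ χ ∈ GammaSigmaSigma d, r = ∫ p, (1 + Real.cos (p.1 + p.2)) ∂χ}

end

open InnerProductGeometry

lemma cos_le_cos_add_two_mul_sin_div_two {s θ α : ℝ} (hs₀ : 0 ≤ s) (hsπ : s ≤ π)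
    (hθ₀ : 0 ≤ θ) (hθπ : θ ≤ π) (hα₀ : 0 ≤ α) (hα : α ≤ s + θ) :
    cos s ≤ cos α + 2 * sin (θ / 2) := by
  have hsinθ : 0 ≤ sin (θ / 2) := sin_nonneg_of_nonneg_of_le_pi (by linarith) (by linarith)
  by_cases hsθ : s + θ ≤ π
  · have hcos : cos (s + θ) ≤ cos α := cos_le_cos_of_nonneg_of_le_pi hα₀ hsθ hα
    -- `cos s - cos (s + θ) = 2 sin (s + θ/2) sin (θ/2)`
    have hdiff := cos_sub (s + θ / 2) (θ / 2)
    have hsum := cos_add (s + θ / 2) (θ / 2)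
    rw [add_sub_cancel_right] at hdiff
    rw [add_assoc, add_halves] at hsum
    nlinarith [sin_le_one (s + θ / 2)]
  · have hsin : cos (s / 2) ≤ sin (θ / 2) := by
      rw [← sin_pi_div_two_sub]
      exact sin_le_sin_of_le_of_le_pi_div_two (by linarith) (by linarith) (by linarith)
    have hcos₀ : 0 ≤ cos (s / 2) := cos_nonneg_of_mem_Icc ⟨by linarith, by linarith⟩
    have hdouble : cos s = 2 * cos (s / 2) ^ 2 - 1 := by
      rw [← cos_two_mul, mul_div_cancel₀ _ two_ne_zero]
    nlinarith [neg_one_le_cos α, cos_le_one (s / 2)]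

section UnitVectors

variable {E : Type*} [NormedAddCommGroup E] [InnerProductSpace ℝ E]

lemma angle_eq_of_inner_eq_cos {x y : E} (hx : ‖x‖ = 1) (hy : ‖y‖ = 1) {φ : ℝ}
    (hφ₀ : 0 ≤ φ) (hφπ : φ ≤ π) (h : inner ℝ x y = cos φ) : angle x y = φ := by
  rw [angle, h, hx, hy, mul_one, div_one, arccos_cos hφ₀ hφπ]

lemma inner_eq_cos_angle {x y : E} (hx : ‖x‖ = 1) (hy : ‖y‖ = 1) :
    inner ℝ x y = cos (angle x y) := by
  rw [← cos_angle_mul_norm_mul_norm, hx, hy, mul_one, mul_one]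

lemma norm_sub_eq_two_mul_sin_angle_div_two {x y : E} (hx : ‖x‖ = 1) (hy : ‖y‖ = 1) :
    ‖x - y‖ = 2 * sin (angle x y / 2) := by
  have hsin : 0 ≤ sin (angle x y / 2) := sin_nonneg_of_nonneg_of_le_pi
    (by linarith [angle_nonneg x y]) (by linarith [angle_le_pi x y, pi_pos])
  have hdouble := cos_two_mul' (angle x y / 2)
  rw [mul_div_cancel₀ _ two_ne_zero] at hdouble
  rw [← sqrt_sq (norm_nonneg _), ← sqrt_sq (by positivity : 0 ≤ 2 * sin (angle x y / 2)),
    norm_sub_sq_real, hx, hy, inner_eq_cos_angle hx hy, hdouble]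
  congr 1
  nlinarith [sin_sq_add_cos_sq (angle x y / 2)]

theorem cos_add_le_inner_add_norm_sub {v₁ n₁ v₂ n₂ : E} (hv₁ : ‖v₁‖ = 1) (hn₁ : ‖n₁‖ = 1)
    (hv₂ : ‖v₂‖ = 1) (hn₂ : ‖n₂‖ = 1) {φ ψ : ℝ} (hφ : 0 ≤ φ) (hψ : 0 ≤ ψ) (hφψ : φ + ψ ≤ π)
    (h₁ : inner ℝ v₁ n₁ = cos φ) (h₂ : inner ℝ v₂ n₂ = cos ψ) :
    cos (φ + ψ) ≤ inner ℝ v₁ v₂ + ‖n₁ - n₂‖ := by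
  have hangle : angle v₁ v₂ ≤ φ + ψ + angle n₁ n₂ := calc
    angle v₁ v₂ ≤ angle v₁ n₁ + angle n₁ v₂ := angle_le_angle_add_angle _ _ _
    _ ≤ angle v₁ n₁ + (angle n₁ n₂ + angle n₂ v₂) := by
      gcongr; exact angle_le_angle_add_angle _ _ _
    _ = φ + ψ + angle n₁ n₂ := by
      rw [angle_eq_of_inner_eq_cos hv₁ hn₁ hφ (by linarith) h₁, angle_comm n₂ v₂,
        angle_eq_of_inner_eq_cos hv₂ hn₂ hψ (by linarith) h₂]
      ring
  rw [inner_eq_cos_angle hv₁ hv₂, norm_sub_eq_two_mul_sin_angle_div_two hn₁ hn₂]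
  exact cos_le_cos_add_two_mul_sin_div_two (by positivity) hφψ (angle_nonneg _ _)
    (angle_le_pi _ _) (angle_nonneg _ _) hangle

lemma inner_cos_smul_add_sin_smul {e₀ e₁ : E} (he₀ : ‖e₀‖ = 1) (he₁ : ‖e₁‖ = 1)
    (h : inner ℝ e₀ e₁ = 0) (s t : ℝ) :
    inner ℝ (cos s • e₀ + sin s • e₁) (cos t • e₀ + sin t • e₁) = cos (s - t) := by
  simp only [inner_add_left, inner_add_right, real_inner_smul_left, real_inner_smul_right,
    real_inner_self_eq_norm_sq, he₀, he₁, h, real_inner_comm e₀ e₁, cos_sub]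
  ring

end UnitVectors

lemma ballVol_pos (d : ℕ) : 0 < ballVol d :=
  div_pos (rpow_pos_of_pos pi_pos _) (Gamma_pos_of_pos (by positivity))

theorem Kfun_eq {d : ℕ} (hd : 2 ≤ d) {lam : ℝ}
    (hlam : ((d : ℝ) + 1) * ballVol d / (4 * ballVol (d - 1)) ≤ lam)
    {φ ψ : ℝ} (hφ : 0 ≤ φ) (hψ : 0 ≤ ψ) (hφψ : φ + ψ ≤ π) :
    Kfun d lam φ ψ = ((d : ℝ) + 1) / 4 * (1 + cos (φ + ψ)) - lam := by
  refine IsLeast.csInf_eq ⟨?_, ?_⟩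
  · set v : ℝ → EuclideanSpace ℝ (Fin d) := fun t =>
      cos t • EuclideanSpace.single ⟨0, by omega⟩ 1 + sin t • EuclideanSpace.single ⟨1, hd⟩ 1
    have hv (s t : ℝ) : inner ℝ (v s) (v t) = cos (s - t) :=
      have he := EuclideanSpace.orthonormal_single (𝕜 := ℝ) (ι := Fin d)
      inner_cos_smul_add_sin_smul (he.1 _) (he.1 _) (he.2 (by simp [Fin.ext_iff])) s t
    have hunit (t : ℝ) : ‖v t‖ = 1 := by
      rw [← pow_eq_one_iff_of_nonneg (norm_nonneg _) two_ne_zero, ← real_inner_self_eq_norm_sq,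
        hv, sub_self, cos_zero]
    refine ⟨v φ, v 0, v (-ψ), v 0, hunit _, hunit _, hunit _, hunit _, ?_, ?_, ?_⟩
    · rw [hv, sub_zero]
    · rw [hv, sub_zero, cos_neg]
    · rw [norm_add_sq_real, hunit, hunit, hv, sub_neg_eq_add, sub_self, norm_zero]
      ring
  · rintro r ⟨v₁, n₁, v₂, n₂, hv₁, hn₁, hv₂, hn₂, h₁, h₂, rfl⟩
    have hkey := cos_add_le_inner_add_norm_sub hv₁ hn₁ hv₂ hn₂ hφ hψ hφψ h₁ h₂
    have hratio : ((d : ℝ) + 1) / 4 ≤ lam * (ballVol (d - 1) / ballVol d) := calc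
      ((d : ℝ) + 1) / 4
          = ((d : ℝ) + 1) * ballVol d / (4 * ballVol (d - 1)) * (ballVol (d - 1) / ballVol d) := by
        field_simp [(ballVol_pos d).ne', (ballVol_pos (d - 1)).ne']
      _ ≤ lam * (ballVol (d - 1) / ballVol d) :=
        mul_le_mul_of_nonneg_right hlam (div_pos (ballVol_pos _) (ballVol_pos _)).le
    have hpos : (0 : ℝ) ≤ ((d : ℝ) + 1) / 4 := by positivity
    rw [norm_add_sq_real, hv₁, hv₂]
    nlinarith [mul_le_mul_of_nonneg_left hkey hpos,
      mul_le_mul_of_nonneg_right hratio (norm_nonneg (n₁ - n₂))]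

lemma integral_sigmaMeasure_density {d : ℕ} (hd : 2 ≤ d) :
    ∫ x in (0 : ℝ)..π / 2, ((d : ℝ) - 1) * sin x ^ (d - 2) * cos x = 1 := by
  have hderiv (x : ℝ) :
      HasDerivAt (fun y => sin y ^ (d - 1)) (((d : ℝ) - 1) * sin x ^ (d - 2) * cos x) x := by
    have h := (hasDerivAt_sin x).pow (d - 1)
    rwa [Nat.cast_sub (by omega), Nat.cast_one, show d - 1 - 1 = d - 2 by omega] at h
  rw [intervalIntegral.integral_eq_sub_of_hasDerivAt (fun x _ => hderiv x)
    (by apply Continuous.intervalIntegrable; fun_prop)]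
  simp [show d - 1 ≠ 0 by omega]

lemma isProbabilityMeasure_sigmaMeasure {d : ℕ} (hd : 2 ≤ d) :
    IsProbabilityMeasure (sigmaMeasure d) := by
  have hnonneg : ∀ᵐ x ∂volume.restrict (Icc 0 (π / 2)),
      0 ≤ ((d : ℝ) - 1) * sin x ^ (d - 2) * cos x := by
    refine (ae_restrict_iff' measurableSet_Icc).2 (ae_of_all _ fun x ⟨hx₀, hx₁⟩ => ?_)
    have : (1 : ℝ) ≤ d := by exact_mod_cast (by omega : 1 ≤ d)
    have := sin_nonneg_of_nonneg_of_le_pi hx₀ (by linarith [pi_pos])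
    have := cos_nonneg_of_mem_Icc ⟨by linarith [pi_pos], hx₁⟩
    positivity
  constructor
  rw [sigmaMeasure, withDensity_apply _ MeasurableSet.univ, Measure.restrict_univ,
    ← ofReal_integral_eq_lintegral_ofReal (Continuous.integrableOn_Icc (by fun_prop)) hnonneg,
    integral_Icc_eq_integral_Ioc, ← intervalIntegral.integral_of_le (by positivity),
    integral_sigmaMeasure_density hd, ENNReal.ofReal_one]

lemma ae_mem_Icc_sigmaMeasure (d : ℕ) : ∀ᵐ x ∂sigmaMeasure d, x ∈ Icc 0 (π / 2) :=
  (withDensity_absolutelyContinuous _ _).ae_le (ae_restrict_mem measurableSet_Icc)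

lemma prod_mem_GammaSigmaSigma {d : ℕ} (hd : 2 ≤ d) :
    (sigmaMeasure d).prod (sigmaMeasure d) ∈ GammaSigmaSigma d :=
  have := isProbabilityMeasure_sigmaMeasure hd
  ⟨Measure.fst_prod, Measure.snd_prod⟩

section Coupling

variable {d : ℕ} {χ : Measure (ℝ × ℝ)}

lemma isProbabilityMeasure_of_mem_GammaSigmaSigma (hd : 2 ≤ d) (hχ : χ ∈ GammaSigmaSigma d) :
    IsProbabilityMeasure χ :=
  have := isProbabilityMeasure_sigmaMeasure hd
  have : IsProbabilityMeasure (χ.map Prod.fst) := hχ.1 ▸ this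
  Measure.isProbabilityMeasure_of_map Prod.fst

lemma ae_mem_Icc_of_mem_GammaSigmaSigma (hχ : χ ∈ GammaSigmaSigma d) :
    ∀ᵐ p ∂χ, p.1 ∈ Icc 0 (π / 2) ∧ p.2 ∈ Icc 0 (π / 2) :=
  (ae_of_ae_map measurable_fst.aemeasurable (hχ.1 ▸ ae_mem_Icc_sigmaMeasure d)).and
    (ae_of_ae_map measurable_snd.aemeasurable (hχ.2 ▸ ae_mem_Icc_sigmaMeasure d))

theorem integral_Kfun_eq (hd : 2 ≤ d) {lam : ℝ}
    (hlam : ((d : ℝ) + 1) * ballVol d / (4 * ballVol (d - 1)) ≤ lam)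
    (hχ : χ ∈ GammaSigmaSigma d) :
    ∫ p, Kfun d lam p.1 p.2 ∂χ = ((d : ℝ) + 1) / 4 * ∫ p, (1 + cos (p.1 + p.2)) ∂χ - lam := by
  have := isProbabilityMeasure_of_mem_GammaSigmaSigma hd hχ
  have hint : Integrable (fun p : ℝ × ℝ => 1 + cos (p.1 + p.2)) χ :=
    .of_bound (by fun_prop) 2 (ae_of_all _ fun p => by
      rw [norm_eq_abs, abs_le]
      constructor <;> linarith [neg_one_le_cos (p.1 + p.2), cos_le_one (p.1 + p.2)])
  rw [integral_congr_ae ((ae_mem_Icc_of_mem_GammaSigmaSigma hχ).mono fun p ⟨h₁, h₂⟩ =>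
      Kfun_eq hd hlam h₁.1 h₂.1 (by linarith [h₁.2, h₂.2])),
    integral_sub (hint.const_mul _) (integrable_const lam), integral_const_mul, integral_const]
  simp

end Coupling

theorem stmt19 (d : ℕ) (hd : 2 ≤ d) (lam : ℝ)
    (hlam : ((d : ℝ) + 1) * ballVol d / (4 * ballVol (d - 1)) ≤ lam) :
    sInf {r : ℝ | ∃ χ ∈ GammaSigmaSigma d, r = ∫ p, Kfun d lam p.1 p.2 ∂χ} =
      mConst d - lam := by
  set S := {r : ℝ | ∃ χ ∈ GammaSigmaSigma d, r = ∫ p, (1 + cos (p.1 + p.2)) ∂χ}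
  set f : ℝ → ℝ := fun s => ((d : ℝ) + 1) / 4 * s - lam
  have himage : {r : ℝ | ∃ χ ∈ GammaSigmaSigma d, r = ∫ p, Kfun d lam p.1 p.2 ∂χ} = f '' S := by
    ext r
    constructor
    · rintro ⟨χ, hχ, rfl⟩
      exact ⟨_, ⟨χ, hχ, rfl⟩, (integral_Kfun_eq hd hlam hχ).symm⟩
    · rintro ⟨_, ⟨χ, hχ, rfl⟩, rfl⟩
      exact ⟨χ, hχ, (integral_Kfun_eq hd hlam hχ).symm⟩
  have hne : S.Nonempty := ⟨_, _, prod_mem_GammaSigmaSigma hd, rfl⟩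
  have hbdd : BddBelow S := ⟨0, by
    rintro _ ⟨χ, -, rfl⟩
    exact integral_nonneg fun p => neg_le_iff_add_nonneg'.mp (neg_one_le_cos _)⟩
  have hmono : Monotone f := fun _ _ hab =>
    sub_le_sub_right (mul_le_mul_of_nonneg_left hab (by positivity)) lam
  rw [himage, ← hmono.map_csInf_of_continuousAt (by fun_prop) hne hbdd]
  rfl
end
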